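/- Let q be a prime power and let a ∈ \overline{F_q} be a root of p(X) = X^{q+1} + X + 1. Then a^{q²+q+1} = 1; in particular a ∈ F_{q³} and a ≠ 0. -/

import Mathlib

/-! Since `x ↦ x ^ q` is a ring endomorphism over `𝔽_q`, `b = a ^ q` is again a root:
`b ^ (q + 1) = -b - 1`. Hence `a ^ (q² + q + 1) = b ^ (q + 1) * a = -a ^ (q + 1) - a = 1`. -/

theorem pow_sq_add_add_one_eq_one {R : Type*} [CommRing R] {q : ℕ} {x : R}
    (hx : x ^ (q + 1) + x + 1 = 0) (hxq : (x ^ q) ^ (q + 1) + x ^ q + 1 = 0) :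
    x ^ (q ^ 2 + q + 1) = 1 := by
  linear_combination x * hxq - hx

theorem pow_cube_eq_self_of_pow_sq_add_add_one_eq_one {M : Type*} [Monoid M] {q : ℕ} {x : M}
    (hq : 1 ≤ q) (h : x ^ (q ^ 2 + q + 1) = 1) : x ^ q ^ 3 = x := by
  obtain ⟨k, rfl⟩ := Nat.exists_eq_add_of_le hq
  rw [show (1 + k) ^ 3 = ((1 + k) ^ 2 + (1 + k) + 1) * k + 1 by ring, pow_succ, pow_mul, h,
    one_pow, one_mul]

theorem stmt_7_general (q : ℕ)
    (F : Type*) [Field F] [Fintype F] (hF : Fintype.card F = q)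
    (a : AlgebraicClosure F) (ha : a ^ (q + 1) + a + 1 = 0) :
    a ^ (q ^ 2 + q + 1) = 1 ∧ a ^ (q ^ 3) = a ∧ a ≠ 0 := by
  subst hF
  have haq : (a ^ Fintype.card F) ^ (Fintype.card F + 1) + a ^ Fintype.card F + 1 = 0 := by
    simpa only [map_add, map_pow, map_one, map_zero, FiniteField.coe_frobeniusAlgHom] using
      congrArg (FiniteField.frobeniusAlgHom F (AlgebraicClosure F)) ha
  have h := pow_sq_add_add_one_eq_one ha haq
  refine ⟨h, pow_cube_eq_self_of_pow_sq_add_add_one_eq_one Fintype.card_pos h, ?_⟩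
  rintro rfl
  simp at h

theorem stmt_7 (q : ℕ) (hq : IsPrimePow q)
    (F : Type*) [Field F] [Fintype F] (hF : Fintype.card F = q)
    (a : AlgebraicClosure F) (ha : a ^ (q + 1) + a + 1 = 0) :
    a ^ (q ^ 2 + q + 1) = 1 ∧ a ^ (q ^ 3) = a ∧ a ≠ 0 :=
  stmt_7_general q F hF a ha
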